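/- Recurrence rule for w_{𝔰𝔬(N)} (summed form): let m ≥ 2, let s be a permutation of Fin m, let r, r' : Fin m be positions with (r' : ℕ) = (r : ℕ) + 1, and let τ := Equiv.swap r r'. Then w_{𝔰𝔬(N)}(s) = w_{𝔰𝔬(N)}(τ * s * τ) + A − B − C + D in U(𝔰𝔬(N)), where: A := ∑ over i : Fin m → Fin N with i r' = i (s r) of the ordered product over positions k of factors f k with f r' := 1, f r := ι(X (i r) (i (s r'))), and f k := ι(X (i k) (i (s k))) otherwise; B := ∑ over i with i r = i (s r') of the ordered product with g r := 1, g r' := ι(X (i r') (i (s r))), and g k := ι(X (i k) (i (s k))) otherwise; C := ∑ over i with Fin.rev (i (s r')) = i (s r) of the ordered product with h r' := 1, h r := ι(X (i r) (Fin.rev (i r'))), and h k := ι(X (i k) (i (s k))) otherwise; D := ∑ over i with i r = Fin.rev (i r') of the ordered product with p r := 1, p r' := ι(X (Fin.rev (i (s r'))) (i (s r))), and p k := ι(X (i k) (i (s k))) otherwise. -/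

import Mathlib

/-! In `U(𝔰𝔬(N))` one has `ι x * ι y = ι y * ι x + ι ⁅x, y⁆`, and `⁅X a b, X c d⁆` is a signed sum of
four generators, each present only when two of the indices `a, b, c, d, ā, b̄, c̄, d̄` coincide.
Applying this to the adjacent factors at positions `r, r'` of every summand of `w(s)` yields the
corresponding summand of `w(τ s τ)`, once that sum is reindexed by `i ↦ i ∘ τ`, plus one summand of
each of `A, B, C, D`. -/


open Matrix in
noncomputable section
open Matrix

attribute [local instance 100] LieRing.ofAssociativeRing

/-- The anti-diagonal identity matrix. -/
def soJ (N : ℕ) : Matrix (Fin N) (Fin N) ℂ := fun i j => if j = Fin.rev i then 1 else 0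

lemma soJ_mul (N : ℕ) (A : Matrix (Fin N) (Fin N) ℂ) (i j : Fin N) :
    (soJ N * A) i j = A (Fin.rev i) j := by
  simp [soJ, Matrix.mul_apply, Fin.rev_eq_iff]

lemma mul_soJ (N : ℕ) (A : Matrix (Fin N) (Fin N) ℂ) (i j : Fin N) :
    (A * soJ N) i j = A i (Fin.rev j) := by
  classical
  simp only [Matrix.mul_apply, soJ]
  rw [Finset.sum_eq_single (Fin.rev j)]
  · simp
  · intro b _ hb
    rw [if_neg, mul_zero]
    intro h
    exact hb (by rw [h, Fin.rev_rev])
  · simp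

/-- The Lie algebra 𝔰𝔬(N). -/
def soL (N : ℕ) : LieSubalgebra ℂ (Matrix (Fin N) (Fin N) ℂ) where
  carrier := {A | Aᵀ * soJ N = -(soJ N * A)}
  add_mem' := by
    intro A B hA hB
    simp only [Set.mem_setOf_eq] at *
    rw [Matrix.transpose_add, Matrix.add_mul, hA, hB, Matrix.mul_add, neg_add]
  zero_mem' := by
    simp [Set.mem_setOf_eq]
  smul_mem' := by
    intro c A hA
    simp only [Set.mem_setOf_eq] at *
    rw [Matrix.transpose_smul, Matrix.smul_mul, hA, Matrix.mul_smul, smul_neg]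
  lie_mem' := by
    intro A B hA hB
    simp only [Set.mem_setOf_eq] at *
    rw [Ring.lie_def, Matrix.transpose_sub, Matrix.transpose_mul, Matrix.transpose_mul,
      Matrix.sub_mul, Matrix.mul_assoc, Matrix.mul_assoc, hA, hB, Matrix.mul_neg,
      Matrix.mul_neg, ← Matrix.mul_assoc, ← Matrix.mul_assoc, hA, hB, Matrix.neg_mul,
      Matrix.neg_mul, neg_neg, neg_neg, Matrix.mul_sub, Matrix.mul_assoc, Matrix.mul_assoc]
    abel

/-- The generators X_{ab} of 𝔰𝔬(N), as matrices. -/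
def soXmat (N : ℕ) (a b : Fin N) : Matrix (Fin N) (Fin N) ℂ :=
  Matrix.single a b 1 - Matrix.single (Fin.rev b) (Fin.rev a) 1

lemma soXmat_mem (N : ℕ) (a b : Fin N) : soXmat N a b ∈ soL N := by
  change (soXmat N a b)ᵀ * soJ N = -(soJ N * soXmat N a b)
  ext i j
  rw [mul_soJ]
  simp only [Matrix.neg_apply, soJ_mul, soXmat, Matrix.sub_apply, Matrix.transpose_apply,
    Matrix.single_apply]
  simp only [Fin.rev_inj, Fin.rev_eq_iff, neg_sub]
  simp [and_comm]

/-- The generators of 𝔰𝔬(N) as elements of the Lie algebra. -/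
def soX (N : ℕ) (a b : Fin N) : soL N := ⟨soXmat N a b, soXmat_mem N a b⟩

/-- The extension of the 𝔰𝔬(N) weight system to permutations. -/
def wso (N : ℕ) {m : ℕ} (s : Equiv.Perm (Fin m)) :
    UniversalEnvelopingAlgebra ℂ ↥(soL N) :=
  ∑ i : Fin m → Fin N,
    (List.ofFn fun k : Fin m =>
      UniversalEnvelopingAlgebra.ι ℂ (soX N (i k) (i (s k)))).prod

section SpliceProd

variable {R : Type*} [Semiring R] {m : ℕ}

/-- The product of the `f k` in increasing order of `k`, with the two factors at positions `r` and
`r + 1` replaced by the single factor `z`. -/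
def spliceProd (f : Fin m → R) (r : ℕ) : R →+ R :=
  (AddMonoidHom.mulLeft ((List.ofFn f).take r).prod).comp
    (AddMonoidHom.mulRight ((List.ofFn f).drop (r + 2)).prod)

lemma spliceProd_apply (f : Fin m → R) (r : ℕ) (z : R) :
    spliceProd f r z = ((List.ofFn f).take r).prod * z * ((List.ofFn f).drop (r + 2)).prod :=
  (mul_assoc _ _ _).symm

variable {r r' : Fin m}

lemma prod_ofFn_eq_spliceProd (hr : (r' : ℕ) = r + 1) (f : Fin m → R) :
    (List.ofFn f).prod = spliceProd f r (f r * f r') := by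
  have hlt : (r : ℕ) + 1 < m := hr ▸ r'.isLt
  have hr' : r' = ⟨r + 1, hlt⟩ := Fin.ext hr
  conv_lhs => rw [← List.take_append_drop r (List.ofFn f)]
  rw [List.prod_append, List.drop_eq_getElem_cons (by simp),
    List.drop_eq_getElem_cons (by simpa), spliceProd_apply, hr']
  simp [mul_assoc]

lemma spliceProd_congr (hr : (r' : ℕ) = r + 1) {f g : Fin m → R}
    (hfg : ∀ k, k ≠ r → k ≠ r' → f k = g k) : spliceProd f r = spliceProd g r := by
  have hlow : ∀ k : Fin m, (k : ℕ) < r → f k = g k := fun k hk =>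
    hfg k (by rintro rfl; omega) (by rintro rfl; omega)
  have hhigh : ∀ k : Fin m, (r : ℕ) + 2 ≤ k → f k = g k := fun k hk =>
    hfg k (by rintro rfl; omega) (by rintro rfl; omega)
  have htake : (List.ofFn f).take r = (List.ofFn g).take r :=
    List.ext_getElem (by simp) fun j hj _ => by
      simp only [List.getElem_take, List.getElem_ofFn]
      exact hlow _ (by simp at hj; omega)
  have hdrop : (List.ofFn f).drop (r + 2) = (List.ofFn g).drop (r + 2) :=
    List.ext_getElem (by simp) fun j _ _ => by
      simp only [List.getElem_drop, List.getElem_ofFn]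
      exact hhigh _ (by simp)
  ext z
  rw [spliceProd_apply, spliceProd_apply, htake, hdrop]

lemma prod_ofFn_eq_spliceProd_of_eq (hr : (r' : ℕ) = r + 1) {f g : Fin m → R}
    (hfg : ∀ k, k ≠ r → k ≠ r' → g k = f k) :
    (List.ofFn g).prod = spliceProd f r (g r * g r') := by
  rw [prod_ofFn_eq_spliceProd hr, spliceProd_congr hr hfg]

lemma prod_ofFn_comp_swap (hr : (r' : ℕ) = r + 1) (f : Fin m → R) :
    (List.ofFn (f ∘ Equiv.swap r r')).prod = spliceProd f r (f r' * f r) := by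
  refine (prod_ofFn_eq_spliceProd_of_eq hr (f := f) fun k h h' => ?_).trans (by simp)
  simp [Equiv.swap_apply_of_ne_of_ne h h']

lemma prod_ofFn_ite_ite (hr : (r' : ℕ) = r + 1) (f : Fin m → R) (x y : R) :
    (List.ofFn fun k => if k = r then x else if k = r' then y else f k).prod =
      spliceProd f r (x * y) := by
  have hne : r' ≠ r := fun h => by rw [h] at hr; omega
  refine (prod_ofFn_eq_spliceProd_of_eq hr (f := f) fun k h h' => ?_).trans (by simp [hne])
  simp [h, h']

lemma prod_ofFn_ite_ite' (hr : (r' : ℕ) = r + 1) (f : Fin m → R) (x y : R) :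
    (List.ofFn fun k => if k = r' then y else if k = r then x else f k).prod =
      spliceProd f r (x * y) := by
  have hne : r ≠ r' := fun h => by rw [h] at hr; omega
  refine (prod_ofFn_eq_spliceProd_of_eq hr (f := f) fun k h h' => ?_).trans (by simp [hne])
  simp [h, h']

end SpliceProd

section Commutator

open UniversalEnvelopingAlgebra

variable {N : ℕ}

lemma single_one_mul_single_one (a b c d : Fin N) :
    Matrix.single a b (1 : ℂ) * Matrix.single c d 1 =
      if b = c then Matrix.single a d 1 else 0 := by
  split_ifs with h
  · rw [h, Matrix.single_mul_single_same, one_mul]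
  · exact Matrix.single_mul_single_of_ne _ _ _ _ h _

lemma ite_soXmat (P : Prop) [Decidable P] (a b : Fin N) :
    (if P then soXmat N a b else 0) =
      (if P then Matrix.single a b (1 : ℂ) else 0) -
        if P then Matrix.single (Fin.rev b) (Fin.rev a) 1 else 0 := by
  split_ifs <;> simp [soXmat]

lemma soXmat_commutator (a b c d : Fin N) :
    soXmat N a b * soXmat N c d - soXmat N c d * soXmat N a b =
      (if c = b then soXmat N a d else 0) - (if a = d then soXmat N c b else 0) -
        (if Fin.rev d = b then soXmat N a (Fin.rev c) else 0) +
          if a = Fin.rev c then soXmat N (Fin.rev d) b else 0 := by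
  rw [ite_soXmat, ite_soXmat, ite_soXmat, ite_soXmat]
  simp only [soXmat, Matrix.sub_mul, Matrix.mul_sub, single_one_mul_single_one, Fin.rev_rev,
    Fin.rev_eq_iff, eq_comm (a := d), eq_comm (a := c), eq_comm (b := b)]
  abel

lemma soX_lie (a b c d : Fin N) :
    ⁅soX N a b, soX N c d⁆ =
      (if c = b then soX N a d else 0) - (if a = d then soX N c b else 0) -
        (if Fin.rev d = b then soX N a (Fin.rev c) else 0) +
          if a = Fin.rev c then soX N (Fin.rev d) b else 0 := by
  apply Subtype.ext
  simp only [LieSubalgebra.coe_bracket, Ring.lie_def, AddMemClass.coe_add,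
    AddSubgroupClass.coe_sub, apply_ite Subtype.val, ZeroMemClass.coe_zero]
  exact soXmat_commutator a b c d

lemma ι_soX_mul_ι_soX (a b c d : Fin N) :
    ι ℂ (soX N a b) * ι ℂ (soX N c d) =
      ι ℂ (soX N c d) * ι ℂ (soX N a b) + (if c = b then ι ℂ (soX N a d) else 0) -
        (if a = d then ι ℂ (soX N c b) else 0) -
          (if Fin.rev d = b then ι ℂ (soX N a (Fin.rev c)) else 0) +
            if a = Fin.rev c then ι ℂ (soX N (Fin.rev d) b) else 0 := by
  simp only [add_sub_assoc, add_assoc]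
  rw [← sub_eq_iff_eq_add', ← Ring.lie_def, ← LieHom.map_lie, soX_lie]
  simp only [map_add, map_sub, apply_ite (ι ℂ), map_zero]

end Commutator

section Recurrence

open UniversalEnvelopingAlgebra

lemma wso_mul_mul_inv (N : ℕ) {m : ℕ} (σ s : Equiv.Perm (Fin m)) :
    wso N (σ * s * σ⁻¹) =
      ∑ i : Fin m → Fin N, (List.ofFn ((fun k => ι ℂ (soX N (i k) (i (s k)))) ∘ ⇑σ⁻¹)).prod := by
  rw [wso, ← (Equiv.arrowCongr σ (Equiv.refl (Fin N))).sum_comp]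
  simp [Equiv.arrowCongr_apply, Function.comp_def, Equiv.Perm.mul_apply]

theorem wso_recurrence_general (N m : ℕ) (s : Equiv.Perm (Fin m)) (r r' : Fin m)
    (hr : (r' : ℕ) = (r : ℕ) + 1) :
    wso N s =
      wso N (Equiv.swap r r' * s * Equiv.swap r r') +
        (∑ i : Fin m → Fin N,
          if i r' = i (s r) then
            (List.ofFn fun k : Fin m =>
              if k = r' then (1 : UniversalEnvelopingAlgebra ℂ ↥(soL N))
              else if k = r then UniversalEnvelopingAlgebra.ι ℂ (soX N (i r) (i (s r')))
              else UniversalEnvelopingAlgebra.ι ℂ (soX N (i k) (i (s k)))).prod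
          else 0) -
        (∑ i : Fin m → Fin N,
          if i r = i (s r') then
            (List.ofFn fun k : Fin m =>
              if k = r then (1 : UniversalEnvelopingAlgebra ℂ ↥(soL N))
              else if k = r' then UniversalEnvelopingAlgebra.ι ℂ (soX N (i r') (i (s r)))
              else UniversalEnvelopingAlgebra.ι ℂ (soX N (i k) (i (s k)))).prod
          else 0) -
        (∑ i : Fin m → Fin N,
          if Fin.rev (i (s r')) = i (s r) then
            (List.ofFn fun k : Fin m =>
              if k = r' then (1 : UniversalEnvelopingAlgebra ℂ ↥(soL N))
              else if k = r then
                UniversalEnvelopingAlgebra.ι ℂ (soX N (i r) (Fin.rev (i r')))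
              else UniversalEnvelopingAlgebra.ι ℂ (soX N (i k) (i (s k)))).prod
          else 0) +
        (∑ i : Fin m → Fin N,
          if i r = Fin.rev (i r') then
            (List.ofFn fun k : Fin m =>
              if k = r then (1 : UniversalEnvelopingAlgebra ℂ ↥(soL N))
              else if k = r' then
                UniversalEnvelopingAlgebra.ι ℂ (soX N (Fin.rev (i (s r'))) (i (s r)))
              else UniversalEnvelopingAlgebra.ι ℂ (soX N (i k) (i (s k)))).prod
          else 0) := by
  have hswap := wso_mul_mul_inv N (Equiv.swap r r') s
  rw [Equiv.swap_inv] at hswap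
  rw [wso, hswap, ← Finset.sum_add_distrib, ← Finset.sum_sub_distrib, ← Finset.sum_sub_distrib,
    ← Finset.sum_add_distrib]
  refine Finset.sum_congr rfl fun i _ => ?_
  simp only [prod_ofFn_comp_swap hr, prod_ofFn_ite_ite hr, prod_ofFn_ite_ite' hr, mul_one, one_mul]
  rw [prod_ofFn_eq_spliceProd hr, ι_soX_mul_ι_soX (i r) (i (s r)) (i r') (i (s r'))]
  simp only [map_add, map_sub, apply_ite (spliceProd _ _), map_zero]

/-- The recurrence rule for w_{𝔰𝔬(N)}, in summed form. -/
theorem wso_recurrence (N m : ℕ) (hm : 2 ≤ m) (s : Equiv.Perm (Fin m)) (r r' : Fin m)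
    (hr : (r' : ℕ) = (r : ℕ) + 1) :
    wso N s =
      wso N (Equiv.swap r r' * s * Equiv.swap r r') +
        (∑ i : Fin m → Fin N,
          if i r' = i (s r) then
            (List.ofFn fun k : Fin m =>
              if k = r' then (1 : UniversalEnvelopingAlgebra ℂ ↥(soL N))
              else if k = r then UniversalEnvelopingAlgebra.ι ℂ (soX N (i r) (i (s r')))
              else UniversalEnvelopingAlgebra.ι ℂ (soX N (i k) (i (s k)))).prod
          else 0) -
        (∑ i : Fin m → Fin N,
          if i r = i (s r') then
            (List.ofFn fun k : Fin m =>
              if k = r then (1 : UniversalEnvelopingAlgebra ℂ ↥(soL N))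
              else if k = r' then UniversalEnvelopingAlgebra.ι ℂ (soX N (i r') (i (s r)))
              else UniversalEnvelopingAlgebra.ι ℂ (soX N (i k) (i (s k)))).prod
          else 0) -
        (∑ i : Fin m → Fin N,
          if Fin.rev (i (s r')) = i (s r) then
            (List.ofFn fun k : Fin m =>
              if k = r' then (1 : UniversalEnvelopingAlgebra ℂ ↥(soL N))
              else if k = r then
                UniversalEnvelopingAlgebra.ι ℂ (soX N (i r) (Fin.rev (i r')))
              else UniversalEnvelopingAlgebra.ι ℂ (soX N (i k) (i (s k)))).prod
          else 0) +
        (∑ i : Fin m → Fin N,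
          if i r = Fin.rev (i r') then
            (List.ofFn fun k : Fin m =>
              if k = r then (1 : UniversalEnvelopingAlgebra ℂ ↥(soL N))
              else if k = r' then
                UniversalEnvelopingAlgebra.ι ℂ (soX N (Fin.rev (i (s r'))) (i (s r)))
              else UniversalEnvelopingAlgebra.ι ℂ (soX N (i k) (i (s k)))).prod
          else 0) :=
  wso_recurrence_general N m s r r' hr

end Recurrence

end
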